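/- Let T̂ ⊆ {1,…,p} satisfy |T̂| ≤ 2s* and ‖(I − Φ_{T̂})Xθ‖² ≤ c s* log p, and assume ‖ε‖² ≤ 2n and event E_n holds. Then for every S ⊆ {1,…,p}: log(π(S)/π(T̂)) ≤ −D(|S| − 2s*) log p + (4s* + 2c s* log p + 2|S| L log p)/β. -/

import Mathlib

open scoped BigOperators
open Finset

noncomputable section

/-- Span of the columns `X j`, `j ∈ S`. -/
def colSpan {n p : ℕ} (X : Fin p → EuclideanSpace ℝ (Fin n)) (S : Finset (Fin p)) :
    Submodule ℝ (EuclideanSpace ℝ (Fin n)) :=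
  Submodule.span ℝ (X '' ↑S)

/-- `Φ_S`, the orthogonal projection of ℝ^n onto the span of the columns in `S`. -/
noncomputable def proj {n p : ℕ} (X : Fin p → EuclideanSpace ℝ (Fin n)) (S : Finset (Fin p)) :
    EuclideanSpace ℝ (Fin n) →ₗ[ℝ] EuclideanSpace ℝ (Fin n) :=
  (colSpan X S).subtype ∘ₗ ((colSpan X S).orthogonalProjection).toLinearMap

/-- Restricted eigenvalue condition: `‖X_S w‖² ≥ n ν ‖w‖²` for all `S` with `|S| ≤ m`. -/
def RECond {n p : ℕ} (X : Fin p → EuclideanSpace ℝ (Fin n)) (ν : ℝ) (m : ℕ) : Prop :=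
  ∀ S : Finset (Fin p), S.card ≤ m → ∀ w : Fin p → ℝ,
    (n : ℝ) * ν * ∑ j ∈ S, w j ^ 2 ≤ ‖∑ j ∈ S, w j • X j‖ ^ 2

/-- The unnormalized weight exp(G(S,Y) − m(S)), where G(S,Y) = ‖Φ_S Y‖²/β and
m(S) = D|S| log p + (2/β) trace(Φ_S) + (4n/β) 1{|S| > 4s}. -/
noncomputable def postWt {n p : ℕ} (X : Fin p → EuclideanSpace ℝ (Fin n))
    (Y : EuclideanSpace ℝ (Fin n)) (β D : ℝ) (s : ℕ) (S : Finset (Fin p)) : ℝ :=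
  Real.exp (‖proj X S Y‖ ^ 2 / β -
    (D * S.card * Real.log p +
      2 * LinearMap.trace ℝ (EuclideanSpace ℝ (Fin n)) (proj X S) / β +
      if 4 * s < S.card then 4 * n / β else 0))

/-- The probability distribution π(S) ∝ exp(G(S,Y) − m(S)) on subsets of {1,…,p}. -/
noncomputable def postPi {n p : ℕ} (X : Fin p → EuclideanSpace ℝ (Fin n))
    (Y : EuclideanSpace ℝ (Fin n)) (β D : ℝ) (s : ℕ) (S : Finset (Fin p)) : ℝ :=
  postWt X Y β D s S / ∑ S' : Finset (Fin p), postWt X Y β D s S'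

open scoped RealInnerProductSpace

/-!
The ratio `π(S)/π(T̂)` is the exponential of the difference of the exponents, so everything
reduces to bounding the gain `‖Φ_S Y‖² - ‖Φ_T̂ Y‖²`. For `|S| > 4s*` it is at most
`‖(I - Φ_T̂) Y‖² ≤ 2‖(I - Φ_T̂) Xθ‖² + 2‖ε‖²`, and the penalty `4n/β` absorbs `2‖ε‖² ≤ 4n`.
For `|S| ≤ 4s*` let `U = S ∪ T̂` and `v = Φ_U Y - Φ_T̂ Y`; the gain is at most
`‖v‖² = ⟨v, Xθ⟩ + ⟨v, ε⟩`. As `v ⊥ span X_T̂`, `⟨v, Xθ⟩ ≤ ‖v‖ ‖(I - Φ_T̂) Xθ‖`. Writing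
`v = ∑_{j ∈ U \ T̂} a_j (I - Φ_T̂) X_j`, Cauchy–Schwarz and `E_n` bound `⟨v, ε⟩²` by
`n L ν log p · |S| · ∑ a_j²`, and the restricted eigenvalue condition on `U` gives
`n ν ∑ a_j² ≤ ‖v‖²`. Solving the resulting quadratic inequality in `‖v‖` bounds the gain by
`2c s* log p + 2|S| L log p`; the trace and cardinality penalties supply the remaining terms.
-/

lemma sq_le_two_mul_sq_add_two_mul {x a t c : ℝ}
    (hc : 0 ≤ c) (hxat : x ^ 2 ≤ x * a + t) (ht : t ^ 2 ≤ x ^ 2 * c) :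
    x ^ 2 ≤ 2 * a ^ 2 + 2 * c := by
  -- AM-GM on both terms: `x a ≤ x²/4 + a²` and `t ≤ x √c ≤ x²/4 + c`
  have hxa : x * a ≤ x ^ 2 / 4 + a ^ 2 := by nlinarith [sq_nonneg (x / 2 - a)]
  have htc : t ≤ x ^ 2 / 4 + c := by
    by_contra! h
    nlinarith [sq_nonneg (x ^ 2 / 4 - c), sq_nonneg x]
  linarith

namespace Submodule

variable {E : Type*} [NormedAddCommGroup E] [InnerProductSpace ℝ E]
  {K W : Submodule ℝ E} [K.HasOrthogonalProjection] [W.HasOrthogonalProjection]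

lemma inner_eq_inner_sub_starProjection {v : E} (hv : v ∈ Kᗮ) (x : E) :
    ⟪v, x⟫ = ⟪v, x - K.starProjection x⟫ := by
  rw [inner_sub_right, (K.mem_orthogonal' v).1 hv _ (K.starProjection_apply_mem x), sub_zero]

lemma norm_sub_starProjection_le (x : E) : ‖x - K.starProjection x‖ ≤ ‖x‖ := by
  rw [← starProjection_orthogonal_val]
  exact Kᗮ.norm_starProjection_apply_le x

lemma starProjection_sub_starProjection_mem_orthogonal (h : K ≤ W) (y : E) :
    W.starProjection y - K.starProjection y ∈ Kᗮ := by
  have hsplit : W.starProjection y - K.starProjection y =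
      (y - K.starProjection y) - (y - W.starProjection y) := by abel
  rw [hsplit]
  exact sub_mem (sub_starProjection_mem_orthogonal y)
    (orthogonal_le h (sub_starProjection_mem_orthogonal y))

lemma norm_sq_starProjection_of_le (h : K ≤ W) (y : E) :
    ‖W.starProjection y‖ ^ 2 =
      ‖K.starProjection y‖ ^ 2 + ‖W.starProjection y - K.starProjection y‖ ^ 2 := by
  have hortho : ⟪K.starProjection y, W.starProjection y - K.starProjection y⟫ = 0 :=
    (K.mem_orthogonal _).1 (starProjection_sub_starProjection_mem_orthogonal h y) _
      (K.starProjection_apply_mem y)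
  conv_lhs => rw [← add_sub_cancel (K.starProjection y) (W.starProjection y)]
  rw [norm_add_sq_real, hortho]
  ring

lemma norm_sq_starProjection_le_of_le (h : K ≤ W) (y : E) :
    ‖K.starProjection y‖ ^ 2 ≤ ‖W.starProjection y‖ ^ 2 := by
  rw [norm_sq_starProjection_of_le h]
  exact le_add_of_nonneg_right (sq_nonneg _)

lemma norm_sq_sub_starProjection_eq_inner (h : K ≤ W) (y : E) :
    ‖W.starProjection y - K.starProjection y‖ ^ 2 =
      ⟪W.starProjection y - K.starProjection y, y⟫ := by
  have hsplit : y - K.starProjection y =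
      (W.starProjection y - K.starProjection y) + (y - W.starProjection y) := by abel
  set v := W.starProjection y - K.starProjection y
  have hvW : v ∈ W := sub_mem (W.starProjection_apply_mem y) (h (K.starProjection_apply_mem y))
  have hvy : ⟪v, y - W.starProjection y⟫ = 0 := by
    rw [real_inner_comm]; exact starProjection_inner_eq_zero y v hvW
  rw [inner_eq_inner_sub_starProjection (starProjection_sub_starProjection_mem_orthogonal h y),
    hsplit, inner_add_right, hvy, add_zero, real_inner_self_eq_norm_sq]

lemma norm_sq_starProjection_add_le (μ ε : E) :
    ‖W.starProjection (μ + ε)‖ ^ 2 ≤ ‖K.starProjection (μ + ε)‖ ^ 2 +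
      2 * ‖μ - K.starProjection μ‖ ^ 2 + 2 * ‖ε‖ ^ 2 := by
  have hW : ‖W.starProjection (μ + ε)‖ ^ 2 ≤ ‖μ + ε‖ ^ 2 :=
    pow_le_pow_left₀ (norm_nonneg _) (W.norm_starProjection_apply_le _) 2
  have hpyth := norm_sq_eq_add_norm_sq_starProjection (μ + ε) K
  rw [starProjection_orthogonal_val] at hpyth
  have hres : μ + ε - K.starProjection (μ + ε) =
      (μ - K.starProjection μ) + (ε - K.starProjection ε) := by rw [map_add]; abel
  have hε : ‖ε - K.starProjection ε‖ ^ 2 ≤ ‖ε‖ ^ 2 :=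
    pow_le_pow_left₀ (norm_nonneg _) (norm_sub_starProjection_le ε) 2
  have hsum : ‖μ + ε - K.starProjection (μ + ε)‖ ^ 2 ≤
      2 * ‖μ - K.starProjection μ‖ ^ 2 + 2 * ‖ε‖ ^ 2 := by
    rw [hres]
    calc _ ≤ (‖μ - K.starProjection μ‖ + ‖ε - K.starProjection ε‖) ^ 2 :=
          pow_le_pow_left₀ (norm_nonneg _) (norm_add_le _ _) 2
      _ ≤ 2 * (‖μ - K.starProjection μ‖ ^ 2 + ‖ε - K.starProjection ε‖ ^ 2) := add_sq_le
      _ ≤ 2 * ‖μ - K.starProjection μ‖ ^ 2 + 2 * ‖ε‖ ^ 2 := by linarith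
  linarith

end Submodule

variable {n p : ℕ} {X : Fin p → EuclideanSpace ℝ (Fin n)}

lemma proj_apply (S : Finset (Fin p)) (v : EuclideanSpace ℝ (Fin n)) :
    proj X S v = (colSpan X S).starProjection v := rfl

lemma proj_mem_colSpan (S : Finset (Fin p)) (v : EuclideanSpace ℝ (Fin n)) :
    proj X S v ∈ colSpan X S :=
  (colSpan X S).starProjection_apply_mem v

lemma mem_colSpan_iff {S : Finset (Fin p)} {v : EuclideanSpace ℝ (Fin n)} :
    v ∈ colSpan X S ↔ ∃ a : Fin p → ℝ, ∑ j ∈ S, a j • X j = v :=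
  Submodule.mem_span_image_finset_iff_exists_fun' ℝ

lemma colSpan_mono {S U : Finset (Fin p)} (h : S ⊆ U) : colSpan X S ≤ colSpan X U :=
  Submodule.span_mono (Set.image_mono h)

lemma trace_proj (S : Finset (Fin p)) :
    LinearMap.trace ℝ (EuclideanSpace ℝ (Fin n)) (proj X S) =
      Module.finrank ℝ (colSpan X S) :=
  LinearMap.IsProj.trace
    ⟨proj_mem_colSpan S, fun _ h => (colSpan X S).starProjection_eq_self_iff.2 h⟩

lemma trace_proj_le_card (S : Finset (Fin p)) :
    LinearMap.trace ℝ (EuclideanSpace ℝ (Fin n)) (proj X S) ≤ S.card := by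
  rw [trace_proj, colSpan, ← Finset.coe_image]
  exact_mod_cast (finrank_span_finset_le_card _).trans Finset.card_image_le

lemma exists_eq_sum_smul_sub_proj {T U : Finset (Fin p)} {v : EuclideanSpace ℝ (Fin n)}
    (hv : v ∈ colSpan X U) (hvT : v ∈ (colSpan X T)ᗮ) :
    ∃ a : Fin p → ℝ, v = ∑ j ∈ U \ T, a j • (X j - proj X T (X j)) := by
  obtain ⟨a, rfl⟩ := mem_colSpan_iff.1 hv
  refine ⟨a, ?_⟩
  calc ∑ j ∈ U, a j • X j = ∑ j ∈ U, a j • X j - proj X T (∑ j ∈ U, a j • X j) := by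
        rw [proj_apply, (colSpan X T).starProjection_apply_eq_zero_iff.2 hvT, sub_zero]
    _ = ∑ j ∈ U, a j • (X j - proj X T (X j)) := by
        simp only [map_sum, map_smul, smul_sub, sum_sub_distrib]
    _ = ∑ j ∈ U \ T, a j • (X j - proj X T (X j)) := by
        refine (sum_subset sdiff_subset fun j hjU hj => ?_).symm
        have hjT : X j ∈ colSpan X T :=
          Submodule.subset_span ⟨j, by simpa [hjU] using hj, rfl⟩
        rw [proj_apply, (colSpan X T).starProjection_eq_self_iff.2 hjT, sub_self, smul_zero]

lemma RECond.mul_sum_sq_le_norm_sq_sum_smul_sub_proj {ν : ℝ} {m : ℕ} (hRE : RECond X ν m)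
    (hν : 0 ≤ ν) {A T : Finset (Fin p)} (hAT : Disjoint A T) (hcard : (A ∪ T).card ≤ m)
    (a : Fin p → ℝ) :
    (n : ℝ) * ν * ∑ j ∈ A, a j ^ 2 ≤ ‖∑ j ∈ A, a j • (X j - proj X T (X j))‖ ^ 2 := by
  obtain ⟨b, hb⟩ := mem_colSpan_iff.1 (proj_mem_colSpan (X := X) T (∑ j ∈ A, a j • X j))
  -- `(I - Φ_T) ∑_A a_j X_j` combines the columns in `A ∪ T`, with coefficients `a` on `A`
  set w : Fin p → ℝ := T.piecewise (-b) a
  have hwA : ∀ j ∈ A, w j = a j := fun j hj =>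
    T.piecewise_eq_of_notMem _ _ (disjoint_left.1 hAT hj)
  have hwT : ∀ j ∈ T, w j = -b j := fun j hj => T.piecewise_eq_of_mem _ _ hj
  have hwA_sq : ∑ j ∈ A, w j ^ 2 = ∑ j ∈ A, a j ^ 2 :=
    sum_congr rfl fun j hj => by rw [hwA j hj]
  have hwA_sum : ∑ j ∈ A, w j • X j = ∑ j ∈ A, a j • X j :=
    sum_congr rfl fun j hj => by rw [hwA j hj]
  have hwT_sum : ∑ j ∈ T, w j • X j = -∑ j ∈ T, b j • X j := by
    rw [← sum_neg_distrib]
    exact sum_congr rfl fun j hj => by rw [hwT j hj, neg_smul]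
  have hcomb : ∑ j ∈ A, a j • (X j - proj X T (X j)) = ∑ j ∈ A ∪ T, w j • X j := by
    rw [sum_union hAT, hwA_sum, hwT_sum, ← sub_eq_add_neg, hb, map_sum]
    simp only [map_smul, smul_sub, sum_sub_distrib]
  calc (n : ℝ) * ν * ∑ j ∈ A, a j ^ 2 = (n : ℝ) * ν * ∑ j ∈ A, w j ^ 2 := by rw [hwA_sq]
    _ ≤ (n : ℝ) * ν * ∑ j ∈ A ∪ T, w j ^ 2 := by
        gcongr
        exact subset_union_left
    _ ≤ _ := hcomb ▸ hRE _ hcard w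

lemma RECond.inner_sq_le {ν : ℝ} {m : ℕ} (hRE : RECond X ν m) (hν : 0 ≤ ν)
    {S T : Finset (Fin p)} (hcard : (S ∪ T).card ≤ m) {B : ℝ} (hB : 0 ≤ B)
    {ε v : EuclideanSpace ℝ (Fin n)} (hv : v ∈ colSpan X (S ∪ T)) (hvT : v ∈ (colSpan X T)ᗮ)
    (hε : ∀ j ∈ S \ T, ⟪X j - proj X T (X j), ε⟫ ^ 2 ≤ n * ν * B) :
    ⟪v, ε⟫ ^ 2 ≤ ‖v‖ ^ 2 * ((S \ T).card * B) := by
  obtain ⟨a, rfl⟩ := exists_eq_sum_smul_sub_proj hv hvT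
  rw [union_sdiff_right]
  have hRE' := hRE.mul_sum_sq_le_norm_sq_sum_smul_sub_proj hν sdiff_disjoint
    (by rwa [sdiff_union_self_eq_union]) a
  calc _ = (∑ j ∈ S \ T, a j * ⟪X j - proj X T (X j), ε⟫) ^ 2 := by
        simp only [sum_inner, real_inner_smul_left]
    _ ≤ (∑ j ∈ S \ T, a j ^ 2) * ∑ j ∈ S \ T, ⟪X j - proj X T (X j), ε⟫ ^ 2 :=
        sum_mul_sq_le_sq_mul_sq _ _ _
    _ ≤ (∑ j ∈ S \ T, a j ^ 2) * ((S \ T).card * (n * ν * B)) := by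
        gcongr
        simpa using sum_le_card_nsmul _ _ _ hε
    _ = ((n : ℝ) * ν * ∑ j ∈ S \ T, a j ^ 2) * ((S \ T).card * B) := by ring
    _ ≤ _ := by gcongr

lemma RECond.norm_sq_proj_le {ν : ℝ} {m : ℕ} (hRE : RECond X ν m) (hν : 0 ≤ ν)
    {S T : Finset (Fin p)} (hcard : (S ∪ T).card ≤ m) {B : ℝ} (hB : 0 ≤ B)
    (μ ε : EuclideanSpace ℝ (Fin n))
    (hε : ∀ j ∈ S \ T, ⟪X j - proj X T (X j), ε⟫ ^ 2 ≤ n * ν * B) :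
    ‖proj X S (μ + ε)‖ ^ 2 ≤
      ‖proj X T (μ + ε)‖ ^ 2 + 2 * ‖μ - proj X T μ‖ ^ 2 + 2 * ((S \ T).card * B) := by
  have hTU : colSpan X T ≤ colSpan X (S ∪ T) := colSpan_mono subset_union_right
  simp only [proj_apply] at hε ⊢
  set v := (colSpan X (S ∪ T)).starProjection (μ + ε) - (colSpan X T).starProjection (μ + ε)
  have hvT : v ∈ (colSpan X T)ᗮ :=
    Submodule.starProjection_sub_starProjection_mem_orthogonal hTU _
  have hv : v ∈ colSpan X (S ∪ T) := sub_mem (Submodule.starProjection_apply_mem _ _)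
    (hTU (Submodule.starProjection_apply_mem _ _))
  have hμ : ⟪v, μ⟫ ≤ ‖v‖ * ‖μ - (colSpan X T).starProjection μ‖ :=
    (Submodule.inner_eq_inner_sub_starProjection hvT μ).trans_le (real_inner_le_norm _ _)
  have hvε := hRE.inner_sq_le hν hcard hB hv hvT (by simpa only [proj_apply] using hε)
  have hv2 : ‖v‖ ^ 2 ≤ ‖v‖ * ‖μ - (colSpan X T).starProjection μ‖ + ⟪v, ε⟫ := by
    rw [Submodule.norm_sq_sub_starProjection_eq_inner hTU, inner_add_right]
    linarith
  have := sq_le_two_mul_sq_add_two_mul (by positivity) hv2 hvε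
  calc ‖(colSpan X S).starProjection (μ + ε)‖ ^ 2
      ≤ ‖(colSpan X (S ∪ T)).starProjection (μ + ε)‖ ^ 2 :=
        Submodule.norm_sq_starProjection_le_of_le (colSpan_mono subset_union_left) _
    _ = ‖(colSpan X T).starProjection (μ + ε)‖ ^ 2 + ‖v‖ ^ 2 :=
        Submodule.norm_sq_starProjection_of_le hTU _
    _ ≤ _ := by linarith

def logPostWt (X : Fin p → EuclideanSpace ℝ (Fin n)) (Y : EuclideanSpace ℝ (Fin n))
    (β D : ℝ) (s : ℕ) (S : Finset (Fin p)) : ℝ :=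
  ‖proj X S Y‖ ^ 2 / β -
    (D * S.card * Real.log p +
      2 * LinearMap.trace ℝ (EuclideanSpace ℝ (Fin n)) (proj X S) / β +
      if 4 * s < S.card then 4 * n / β else 0)

lemma log_postPi_div_postPi (Y : EuclideanSpace ℝ (Fin n)) (β D : ℝ) (s : ℕ)
    (S S' : Finset (Fin p)) :
    Real.log (postPi X Y β D s S / postPi X Y β D s S') =
      logPostWt X Y β D s S - logPostWt X Y β D s S' := by
  have hZ : 0 < ∑ S'' : Finset (Fin p), postWt X Y β D s S'' :=
    sum_pos (fun _ _ => Real.exp_pos _) ⟨∅, mem_univ _⟩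
  rw [postPi, postPi, div_div_div_cancel_right₀ hZ.ne', postWt, postWt, ← Real.exp_sub,
    Real.log_exp, logPostWt, logPostWt]

lemma logPostWt_sub_logPostWt_le {Y : EuclideanSpace ℝ (Fin n)} {β D : ℝ} {s : ℕ}
    (hβ : 0 < β) (hD : 0 ≤ D) (hp : 1 ≤ p) {S S' : Finset (Fin p)} (hS' : S'.card ≤ 2 * s)
    {R : ℝ} (hgain : ‖proj X S Y‖ ^ 2 ≤
      ‖proj X S' Y‖ ^ 2 + R + if 4 * s < S.card then (4 * n : ℝ) else 0) :
    logPostWt X Y β D s S - logPostWt X Y β D s S' ≤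
      -D * ((S.card : ℝ) - 2 * s) * Real.log p + (4 * s + R) / β := by
  have hlogp : 0 ≤ Real.log p := Real.log_nonneg (by exact_mod_cast hp)
  have htrS : 0 ≤ LinearMap.trace ℝ (EuclideanSpace ℝ (Fin n)) (proj X S) := by
    rw [trace_proj]; positivity
  have htrS' : LinearMap.trace ℝ (EuclideanSpace ℝ (Fin n)) (proj X S') ≤ 2 * s :=
    (trace_proj_le_card S').trans (by exact_mod_cast hS')
  have hS'R : (S'.card : ℝ) ≤ 2 * s := by exact_mod_cast hS'
  have hβ' : 0 ≤ β⁻¹ := inv_nonneg.2 hβ.le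
  rw [logPostWt, logPostWt, if_neg (by omega : ¬4 * s < S'.card)]
  simp only [div_eq_mul_inv]
  split_ifs at hgain ⊢ <;>
  linarith [mul_le_mul_of_nonneg_right hgain hβ', mul_nonneg htrS hβ',
    mul_nonneg (sub_nonneg.2 htrS') hβ', mul_nonneg (mul_nonneg hD (sub_nonneg.2 hS'R)) hlogp]

theorem stmt8_general {n p s : ℕ} (hp : 2 ≤ p) (hs : 0 < s)
    (X : Fin p → EuclideanSpace ℝ (Fin n))
    {ν : ℝ} (hν : 0 < ν) (hRE : RECond X ν (6 * s))
    (θ : Fin p → ℝ)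
    (ε Y : EuclideanSpace ℝ (Fin n)) (hY : Y = (∑ j, θ j • X j) + ε)
    (β D c L : ℝ) (hβ : 0 < β) (hD : 0 < D) (hL : 0 < L)
    (That : Finset (Fin p)) (hThatcard : That.card ≤ 2 * s)
    (hThatrisk : ‖(∑ j, θ j • X j) - proj X That (∑ j, θ j • X j)‖ ^ 2 ≤
      c * s * Real.log p)
    (hF : ‖ε‖ ^ 2 ≤ 2 * n)
    (hE : ∀ S : Finset (Fin p), S.card < 6 * s → ∀ j ∉ S,
      (inner ℝ (X j - proj X S (X j)) ε : ℝ) ^ 2 ≤ (n : ℝ) * L * ν * Real.log p)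
    (S : Finset (Fin p)) :
    Real.log (postPi X Y β D s S / postPi X Y β D s That) ≤
      -D * ((S.card : ℝ) - 2 * s) * Real.log p +
        (4 * s + 2 * c * s * Real.log p + 2 * S.card * L * Real.log p) / β := by
  have hLlogp : 0 ≤ L * Real.log p :=
    mul_nonneg hL.le (Real.log_nonneg (by exact_mod_cast (by omega : 1 ≤ p)))
  have hgain : ‖proj X S Y‖ ^ 2 ≤ ‖proj X That Y‖ ^ 2 +
      (2 * c * s * Real.log p + 2 * S.card * L * Real.log p) +
      if 4 * s < S.card then (4 * n : ℝ) else 0 := by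
    subst hY
    split_ifs with hS
    · have := Submodule.norm_sq_starProjection_add_le (K := colSpan X That)
        (W := colSpan X S) (∑ j, θ j • X j) ε
      simp only [← proj_apply] at this
      linarith [mul_nonneg (Nat.cast_nonneg (α := ℝ) S.card) hLlogp]
    · have := hRE.norm_sq_proj_le hν.le ((card_union_le S That).trans (by omega)) hLlogp
        (∑ j, θ j • X j) ε fun j hj => (hE That (by omega) j (mem_sdiff.1 hj).2).trans_eq (by ring)
      have hcard : ((S \ That).card : ℝ) ≤ S.card := by exact_mod_cast card_le_card sdiff_subset
      linarith [mul_le_mul_of_nonneg_right hcard hLlogp]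
  rw [log_postPi_div_postPi]
  exact (logPostWt_sub_logPostWt_le hβ hD.le (by omega) hThatcard hgain).trans_eq (by ring)

/-- under events A_n, E_n, F_n, for every S,
log(π(S)/π(T̂)) ≤ −D(|S| − 2s*) log p + (4s* + 2c s* log p + 2|S| L log p)/β. -/
theorem stmt8 {n p s : ℕ} (hn : 0 < n) (hp : 2 ≤ p) (hs : 0 < s) (hsp : 6 * s ≤ p)
    (X : Fin p → EuclideanSpace ℝ (Fin n))
    (hX : ∀ j, ‖X j‖ = Real.sqrt n)
    {ν : ℝ} (hν : 0 < ν) (hRE : RECond X ν (6 * s))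
    (θ : Fin p → ℝ) (T : Finset (Fin p)) (hT : T = Finset.univ.filter fun j => θ j ≠ 0)
    (hTcard : T.card = s)
    (ε Y : EuclideanSpace ℝ (Fin n)) (hY : Y = (∑ j, θ j • X j) + ε)
    (β D c L : ℝ) (hβ : 0 < β) (hD : 0 < D) (hc : 0 < c) (hL : 0 < L)
    (That : Finset (Fin p)) (hThatcard : That.card ≤ 2 * s)
    (hThatrisk : ‖(∑ j, θ j • X j) - proj X That (∑ j, θ j • X j)‖ ^ 2 ≤
      c * s * Real.log p)
    (hF : ‖ε‖ ^ 2 ≤ 2 * n)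
    (hE : ∀ S : Finset (Fin p), S.card < 6 * s → ∀ j ∉ S,
      (inner ℝ (X j - proj X S (X j)) ε : ℝ) ^ 2 ≤ (n : ℝ) * L * ν * Real.log p)
    (S : Finset (Fin p)) :
    Real.log (postPi X Y β D s S / postPi X Y β D s That) ≤
      -D * ((S.card : ℝ) - 2 * s) * Real.log p +
        (4 * s + 2 * c * s * Real.log p + 2 * S.card * L * Real.log p) / β :=
  stmt8_general hp hs X hν hRE θ ε Y hY β D c L hβ hD hL That hThatcard hThatrisk hF hE S

end
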